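/- Let F be a field of characteristic p > 0 (p prime) and let V be a module over the universal enveloping algebra U(sl₂(F)) that is generated (as a U(sl₂(F))-module) by a vector v satisfying e·v = 0 and h·v = −v. Then the central element w = (h+1)² + 4fe acts as zero on all of V, i.e., w·u = 0 for every u ∈ V. -/

import Mathlib

open LieAlgebra.SpecialLinear UniversalEnvelopingAlgebra

noncomputable section

/-- `e = E₁₂` in `sl₂(F)`. -/
def sl2E (F : Type*) [Field F] : sl (Fin 2) F := LieAlgebra.SpecialLinear.single (0 : Fin 2) 1 (by decide) (1 : F)

/-- `f = E₂₁` in `sl₂(F)`. -/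
def sl2F (F : Type*) [Field F] : sl (Fin 2) F := LieAlgebra.SpecialLinear.single (1 : Fin 2) 0 (by decide) (1 : F)

/-- `h = E₁₁ - E₂₂` in `sl₂(F)`. -/
def sl2H (F : Type*) [Field F] : sl (Fin 2) F :=
  ⟨Matrix.single 0 0 (1 : F) - Matrix.single 1 1 (1 : F), by
    change _ ∈ LinearMap.ker (Matrix.traceLinearMap (Fin 2) F F)
    rw [LinearMap.mem_ker, Matrix.traceLinearMap_apply]
    simp [Matrix.trace, Matrix.diag, Matrix.single, Fin.sum_univ_two]⟩


/-! The element `w = (h+1)² + 4fe` commutes with `e`, `f` and `h` by the `sl₂` relations, hence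
with all of `U(sl₂)`, which is generated by the image of `sl₂`. It kills `v`, since `(h+1)·v = 0`
and `e·v = 0`, and a central element killing a generator kills the whole module. -/

section Casimir

variable {A : Type*} [Ring A] {e f h : A}

def sl2Casimir (e f h : A) : A := (h + 1) ^ 2 + 4 * f * e

theorem commute_sl2Casimir_e (hhe : h * e - e * h = 2 * e) (hef : e * f - f * e = h) :
    Commute (sl2Casimir e f h) e := by
  rw [← sub_eq_zero] at hhe hef
  rw [commute_iff_eq, ← sub_eq_zero]
  calc sl2Casimir e f h * e - e * sl2Casimir e f h
      = h * (h * e - e * h - 2 * e) + (h * e - e * h - 2 * e) * h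
        - 4 * ((e * f - f * e - h) * e) := by unfold sl2Casimir; noncomm_ring
    _ = 0 := by rw [hhe, hef]; simp

theorem commute_sl2Casimir_f (hhf : h * f - f * h = -2 * f) (hef : e * f - f * e = h) :
    Commute (sl2Casimir e f h) f := by
  rw [← sub_eq_zero, neg_mul, sub_neg_eq_add] at hhf
  rw [← sub_eq_zero] at hef
  rw [commute_iff_eq, ← sub_eq_zero]
  calc sl2Casimir e f h * f - f * sl2Casimir e f h
      = h * (h * f - f * h + 2 * f) + (h * f - f * h + 2 * f) * h
        + 4 * (f * (e * f - f * e - h)) := by unfold sl2Casimir; noncomm_ring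
    _ = 0 := by rw [hhf, hef]; simp

theorem commute_sl2Casimir_h (hhe : h * e - e * h = 2 * e) (hhf : h * f - f * h = -2 * f) :
    Commute (sl2Casimir e f h) h := by
  rw [← sub_eq_zero] at hhe
  rw [← sub_eq_zero, neg_mul, sub_neg_eq_add] at hhf
  rw [commute_iff_eq, ← sub_eq_zero]
  calc sl2Casimir e f h * h - h * sl2Casimir e f h
      = -4 * ((h * f - f * h + 2 * f) * e) - 4 * (f * (h * e - e * h - 2 * e)) := by
        unfold sl2Casimir; noncomm_ring
    _ = 0 := by rw [hhe, hhf]; simp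

theorem sl2Casimir_smul_eq_zero {M : Type*} [AddCommGroup M] [Module A M] {v : M}
    (he : e • v = 0) (hh : h • v = -v) : sl2Casimir e f h • v = 0 := by
  have hh1 : (h + 1) • v = 0 := by rw [add_smul, one_smul, hh, neg_add_cancel]
  rw [sl2Casimir, add_smul, sq, mul_smul, hh1, mul_smul, he]
  simp

end Casimir

theorem smul_eq_zero_of_commute_of_span_singleton_eq_top {R M : Type*} [Semiring R]
    [AddCommMonoid M] [Module R M] {z : R} (hz : ∀ a, Commute z a) {v : M} (hv : z • v = 0)
    (hgen : Submodule.span R {v} = ⊤) (u : M) : z • u = 0 := by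
  obtain ⟨a, rfl⟩ := Submodule.mem_span_singleton.mp (hgen ▸ Submodule.mem_top : u ∈ _)
  rw [← mul_smul, (hz a).eq, mul_smul, hv, smul_zero]

namespace UniversalEnvelopingAlgebra

variable {R L : Type*} [CommRing R] [LieRing L] [LieAlgebra R L]

theorem ι_lie (x y : L) : ι R ⁅x, y⁆ = ι R x * ι R y - ι R y * ι R x := by
  let _ := LieRing.ofAssociativeRing (A := UniversalEnvelopingAlgebra R L)
  rw [LieHom.map_lie, Ring.lie_def]

theorem adjoin_range_ι :
    Algebra.adjoin R (Set.range (ι R : L → UniversalEnvelopingAlgebra R L)) = ⊤ := by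
  have : Set.range (ι R : L → UniversalEnvelopingAlgebra R L) =
      mkAlgHom R L '' Set.range (TensorAlgebra.ι R) := by
    rw [← Set.range_comp]; rfl
  rw [this, ← AlgHom.map_adjoin, TensorAlgebra.adjoin_range_ι, Algebra.map_top,
    AlgHom.range_eq_top]
  exact RingCon.mkₐ_surjective _

theorem commute_of_forall_commute_ι {z : UniversalEnvelopingAlgebra R L}
    (hz : ∀ x, Commute z (ι R x)) (a : UniversalEnvelopingAlgebra R L) : Commute z a :=
  Algebra.commute_of_mem_adjoin_of_forall_mem_commute (by rw [adjoin_range_ι]; trivial)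
    (by rintro _ ⟨x, rfl⟩; exact hz x)

end UniversalEnvelopingAlgebra

section SL2

variable (F : Type*) [Field F]

theorem sl2_lie_h_e : ⁅sl2H F, sl2E F⁆ = (2 : F) • sl2E F := by
  ext : 1
  simp [Ring.lie_def, sl2E, sl2H, sub_mul, mul_sub, Matrix.single_mul_single_same,
    Matrix.single_mul_single_of_ne]
  rw [← Matrix.single_add, one_add_one_eq_two]

theorem sl2_lie_h_f : ⁅sl2H F, sl2F F⁆ = (-2 : F) • sl2F F := by
  ext : 1
  simp [Ring.lie_def, sl2F, sl2H, sub_mul, mul_sub, Matrix.single_mul_single_same,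
    Matrix.single_mul_single_of_ne]
  rw [← neg_add', ← Matrix.single_add, one_add_one_eq_two]

theorem sl2_lie_e_f : ⁅sl2E F, sl2F F⁆ = sl2H F := by
  ext : 1
  simp [Ring.lie_def, sl2E, sl2F, sl2H]

theorem sl2_eq_smul_e_add_smul_f_add_smul_h (x : sl (Fin 2) F) :
    x = x.val 0 1 • sl2E F + x.val 1 0 • sl2F F + x.val 0 0 • sl2H F := by
  have htr : Matrix.trace x.val = 0 := x.2
  rw [Matrix.trace_fin_two] at htr
  ext i j : 2
  fin_cases i <;> fin_cases j <;> simp [sl2E, sl2F, sl2H, Matrix.single]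
  linear_combination htr

theorem commute_sl2Casimir_ι (x : sl (Fin 2) F) :
    Commute (sl2Casimir (ι F (sl2E F)) (ι F (sl2F F)) (ι F (sl2H F))) (ι F x) := by
  have hhe : ι F (sl2H F) * ι F (sl2E F) - ι F (sl2E F) * ι F (sl2H F) = 2 * ι F (sl2E F) := by
    rw [← ι_lie, sl2_lie_h_e, map_smul, two_smul, two_mul]
  have hhf : ι F (sl2H F) * ι F (sl2F F) - ι F (sl2F F) * ι F (sl2H F) = -2 * ι F (sl2F F) := by
    rw [← ι_lie, sl2_lie_h_f, map_smul, neg_smul, two_smul, neg_mul, two_mul]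
  have hef : ι F (sl2E F) * ι F (sl2F F) - ι F (sl2F F) * ι F (sl2E F) = ι F (sl2H F) := by
    rw [← ι_lie, sl2_lie_e_f]
  rw [sl2_eq_smul_e_add_smul_f_add_smul_h F x, map_add, map_add, map_smul, map_smul, map_smul]
  exact (((commute_sl2Casimir_e hhe hef).smul_right _).add_right
    ((commute_sl2Casimir_f hhf hef).smul_right _)).add_right
    ((commute_sl2Casimir_h hhe hhf).smul_right _)

end SL2

theorem casimir_acts_as_zero_general (F : Type*) [Field F]
    (V : Type*) [AddCommGroup V]
    [Module (UniversalEnvelopingAlgebra F (sl (Fin 2) F)) V]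
    (v : V)
    (hgen : Submodule.span (UniversalEnvelopingAlgebra F (sl (Fin 2) F)) {v} = ⊤)
    (he : (ι F (sl2E F)) • v = 0)
    (hh : (ι F (sl2H F)) • v = -v) :
    ∀ u : V, ((ι F (sl2H F) + 1) ^ 2 + 4 * ι F (sl2F F) * ι F (sl2E F)) • u = 0 :=
  smul_eq_zero_of_commute_of_span_singleton_eq_top
    (UniversalEnvelopingAlgebra.commute_of_forall_commute_ι (commute_sl2Casimir_ι F))
    (sl2Casimir_smul_eq_zero he hh) hgen

/-- If a `U(sl₂(F))`-module `V` (over a field of prime characteristic `p`) is generated by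
a maximal vector `v` of weight `−1` (that is, `e·v = 0` and `h·v = −v`), then the central
element `w = (h+1)² + 4fe` acts as zero on all of `V`. -/
theorem casimir_acts_as_zero (F : Type*) [Field F] (p : ℕ) (hp : p.Prime) [CharP F p]
    (V : Type*) [AddCommGroup V]
    [Module (UniversalEnvelopingAlgebra F (sl (Fin 2) F)) V]
    (v : V)
    (hgen : Submodule.span (UniversalEnvelopingAlgebra F (sl (Fin 2) F)) {v} = ⊤)
    (he : (ι F (sl2E F)) • v = 0)
    (hh : (ι F (sl2H F)) • v = -v) :
    ∀ u : V, ((ι F (sl2H F) + 1) ^ 2 + 4 * ι F (sl2F F) * ι F (sl2E F)) • u = 0 :=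
  casimir_acts_as_zero_general F V v hgen he hh

end
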